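/- arXiv:2509.15071 — 5 statements merged into one kernel-verified Lean document; each statement's English description precedes it below -/
import Mathlib

section
/- If δ > (2/l)·ln(v₂/v₁) with 0 < v₁ < v₂, then σ₁·v₁ - σ₂·v₂ > 0, where σ₁ = σ(d) and σ₂ = σ(d+δ). -/
/-- If `δ > (2/l)·ln(v₂/v₁)` with `0 < v₁ < v₂`, then `σ₁·v₁ - σ₂·v₂ > 0`,
where `σ₁ = σ(d)` and `σ₂ = σ(d+δ)`. -/
theorem sigma_gap_pos (l d δ v₁ v₂ : ℝ) (hl : 0 < l)
    (hv₁ : 0 < v₁) (hv : v₁ < v₂)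
    (hδ : δ > (2 / l) * Real.log (v₂ / v₁))
    (σ : ℝ → ℝ) (hσ : ∀ x₁, σ x₁ = 1 / (1 + Real.exp (l * (x₁ - d - δ / 2)))) :
    σ d * v₁ - σ (d + δ) * v₂ > 0 := by
  rw [hσ, hσ]
  set t : ℝ := l * δ / 2 with ht
  have h1 : l * (d - d - δ / 2) = -t := by rw [ht]; ring
  have h2 : l * (d + δ - d - δ / 2) = t := by rw [ht]; ring
  rw [h1, h2]
  have hlog : Real.log (v₂ / v₁) < t := by
    have : (2 / l) * Real.log (v₂ / v₁) < δ := hδ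
    rw [ht]
    have hl' : (0:ℝ) < 2 / l := by positivity
    calc Real.log (v₂ / v₁) = (l/2) * ((2/l) * Real.log (v₂ / v₁)) := by
            field_simp
      _ < (l/2) * δ := by
            apply mul_lt_mul_of_pos_left this (by positivity)
      _ = l * δ / 2 := by ring
  have hexp : v₂ / v₁ < Real.exp t := by
    calc v₂ / v₁ = Real.exp (Real.log (v₂ / v₁)) := by
          rw [Real.exp_log (div_pos (by linarith) hv₁)]
      _ < Real.exp t := Real.exp_lt_exp.mpr hlog
  have hev : v₂ < v₁ * Real.exp t := by
    have := (div_lt_iff₀ hv₁).mp hexp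
    linarith
  have hpos1 : 0 < 1 + Real.exp (-t) := by positivity
  have hpos2 : 0 < 1 + Real.exp t := by positivity
  rw [gt_iff_lt, sub_pos, div_mul_eq_mul_div, div_mul_eq_mul_div,
    div_lt_div_iff₀ hpos2 hpos1]
  have hinv : Real.exp (-t) * Real.exp t = 1 := by
    rw [← Real.exp_add]; simp
  nlinarith [Real.exp_pos t, Real.exp_pos (-t), mul_pos hv₁ (Real.exp_pos t)]
end

section
/- On the subspace {x : p₁₂x₁ + p₂₂x₂ = 0}, the Lie derivative L_F W(x) of W = (1+θσ(x₁))V(x) - k along F(x) = (x₂, f(x)) equals -(p₁₂·det(P)/p₂₂²)·x₁²·[θσ(x₁)(1 - (l/2)(1-σ(x₁))x₁) + 1], and hence is strictly negative for all nonzero such x whenever p₁₂ > 0, det(P) > 0, and 1 - (l/2)(1-σ(x₁))x₁ > 0. -/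
/-! On the subspace `p₁₂ x₁ + p₂₂ x₂ = 0` the partial derivative `∂W/∂x₂` vanishes, so `L_F W` does
not see `f` and equals `(∂W/∂x₁) x₂`. Since the logistic `σ` satisfies `σ' = -l σ (1 - σ)` and, on
the subspace, `V = det P · x₁² / (2 p₂₂)` and `p₁₁ x₁ + p₁₂ x₂ = det P · x₁ / p₂₂`, the formula is an
identity of rational functions; its sign is that of `-x₁²` times a positive bracket. -/

theorem HasDerivAt.one_div_one_add_exp {u : ℝ → ℝ} {u' x : ℝ} (hu : HasDerivAt u u' x) :
    HasDerivAt (fun t => 1 / (1 + Real.exp (u t)))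
      (-u' * (1 / (1 + Real.exp (u x))) * (1 - 1 / (1 + Real.exp (u x)))) x := by
  have hden : 1 + Real.exp (u x) ≠ 0 := by positivity
  simp only [one_div]
  refine ((hu.exp.const_add 1).inv hden).congr_deriv ?_
  field_simp
  ring

theorem hasDerivAt_quadratic_fst (p₁₁ p₁₂ p₂₂ x₁ x₂ : ℝ) :
    HasDerivAt (fun t => (p₁₁ * t ^ 2 + 2 * p₁₂ * t * x₂ + p₂₂ * x₂ ^ 2) / 2)
      (p₁₁ * x₁ + p₁₂ * x₂) x₁ := by
  refine ((((hasDerivAt_pow 2 x₁).const_mul p₁₁).add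
    (((hasDerivAt_id' x₁).const_mul (2 * p₁₂)).mul_const x₂)).add_const
      (p₂₂ * x₂ ^ 2)).div_const 2 |>.congr_deriv ?_
  push_cast
  ring

theorem hasDerivAt_quadratic_snd (p₁₁ p₁₂ p₂₂ x₁ x₂ : ℝ) :
    HasDerivAt (fun t => (p₁₁ * x₁ ^ 2 + 2 * p₁₂ * x₁ * t + p₂₂ * t ^ 2) / 2)
      (p₁₂ * x₁ + p₂₂ * x₂) x₂ := by
  refine ((((hasDerivAt_id' x₂).const_mul (2 * p₁₂ * x₁)).const_add (p₁₁ * x₁ ^ 2)).add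
    ((hasDerivAt_pow 2 x₂).const_mul p₂₂)).div_const 2 |>.congr_deriv ?_
  push_cast
  ring

theorem LFW_on_subspace_general (p₁₁ p₁₂ p₂₂ l d δ θ k : ℝ) (f : ℝ → ℝ → ℝ)
    (hp₁₂ : 0 < p₁₂) (hp₂₂ : 0 < p₂₂) (hdet : 0 < p₁₁ * p₂₂ - p₁₂ ^ 2)
    (hθ : 0 < θ)
    (σ : ℝ → ℝ) (hσ : ∀ x₁, σ x₁ = 1 / (1 + Real.exp (l * (x₁ - d - δ / 2))))
    (W : ℝ → ℝ → ℝ)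
    (hW : ∀ x₁ x₂, W x₁ x₂ =
      (1 + θ * σ x₁) * ((p₁₁ * x₁ ^ 2 + 2 * p₁₂ * x₁ * x₂ + p₂₂ * x₂ ^ 2) / 2) - k) :
    ∀ x₁ x₂ : ℝ, x₂ = -(p₁₂ / p₂₂) * x₁ →
      (deriv (fun t => W t x₂) x₁) * x₂ + (deriv (fun t => W x₁ t) x₂) * f x₁ x₂ =
        -(p₁₂ * (p₁₁ * p₂₂ - p₁₂ ^ 2) / p₂₂ ^ 2) * x₁ ^ 2 *
          (θ * σ x₁ * (1 - (l / 2) * (1 - σ x₁) * x₁) + 1) ∧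
      (x₁ ≠ 0 → 1 - (l / 2) * (1 - σ x₁) * x₁ > 0 →
        (deriv (fun t => W t x₂) x₁) * x₂ + (deriv (fun t => W x₁ t) x₂) * f x₁ x₂ < 0) := by
  intro x₁ x₂ hx₂
  have hσ' : HasDerivAt σ (-l * σ x₁ * (1 - σ x₁)) x₁ := by
    rw [funext hσ]
    exact ((((hasDerivAt_id' x₁).sub_const d).sub_const (δ / 2)).const_mul l).one_div_one_add_exp
      |>.congr_deriv (by ring)
  have hW₁ : deriv (fun t => W t x₂) x₁ = θ * (-l * σ x₁ * (1 - σ x₁)) *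
      ((p₁₁ * x₁ ^ 2 + 2 * p₁₂ * x₁ * x₂ + p₂₂ * x₂ ^ 2) / 2) +
      (1 + θ * σ x₁) * (p₁₁ * x₁ + p₁₂ * x₂) := by
    simp only [hW]
    exact ((((hσ'.const_mul θ).const_add 1).mul (hasDerivAt_quadratic_fst ..)).sub_const k).deriv
  have hW₂ : deriv (fun t => W x₁ t) x₂ = 0 := by
    simp only [hW]
    rw [(((hasDerivAt_quadratic_snd ..).const_mul _).sub_const k).deriv, hx₂]
    field_simp
    ring
  have hLF : (deriv (fun t => W t x₂) x₁) * x₂ + (deriv (fun t => W x₁ t) x₂) * f x₁ x₂ =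
      -(p₁₂ * (p₁₁ * p₂₂ - p₁₂ ^ 2) / p₂₂ ^ 2) * x₁ ^ 2 *
        (θ * σ x₁ * (1 - (l / 2) * (1 - σ x₁) * x₁) + 1) := by
    rw [hW₁, hW₂, hx₂]
    field_simp
    ring
  refine ⟨hLF, fun hx₁ hbracket => hLF ▸ ?_⟩
  have hσ_pos : 0 < σ x₁ := by rw [hσ]; positivity
  have hB : 0 < θ * σ x₁ * (1 - (l / 2) * (1 - σ x₁) * x₁) + 1 := by positivity
  have hC : 0 < p₁₂ * (p₁₁ * p₂₂ - p₁₂ ^ 2) / p₂₂ ^ 2 * x₁ ^ 2 := by positivity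
  linarith [mul_pos hC hB]

/-- On the subspace `p₁₂x₁ + p₂₂x₂ = 0`, the Lie derivative `L_F W` of
`W = (1+θσ(x₁))V - k` along `F(x) = (x₂, f(x))` equals
`-(p₁₂ det P/p₂₂²)·x₁²·[θσ(x₁)(1-(l/2)(1-σ(x₁))x₁)+1]`, hence is negative
for nonzero such `x` whenever `1 - (l/2)(1-σ(x₁))x₁ > 0`. -/
theorem LFW_on_subspace (p₁₁ p₁₂ p₂₂ l d δ θ k : ℝ) (f : ℝ → ℝ → ℝ)
    (hp₁₂ : 0 < p₁₂) (hp₂₂ : 0 < p₂₂) (hdet : 0 < p₁₁ * p₂₂ - p₁₂ ^ 2)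
    (hl : 0 < l) (hθ : 0 < θ)
    (σ : ℝ → ℝ) (hσ : ∀ x₁, σ x₁ = 1 / (1 + Real.exp (l * (x₁ - d - δ / 2))))
    (W : ℝ → ℝ → ℝ)
    (hW : ∀ x₁ x₂, W x₁ x₂ =
      (1 + θ * σ x₁) * ((p₁₁ * x₁ ^ 2 + 2 * p₁₂ * x₁ * x₂ + p₂₂ * x₂ ^ 2) / 2) - k) :
    ∀ x₁ x₂ : ℝ, x₂ = -(p₁₂ / p₂₂) * x₁ →
      (deriv (fun t => W t x₂) x₁) * x₂ + (deriv (fun t => W x₁ t) x₂) * f x₁ x₂ =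
        -(p₁₂ * (p₁₁ * p₂₂ - p₁₂ ^ 2) / p₂₂ ^ 2) * x₁ ^ 2 *
          (θ * σ x₁ * (1 - (l / 2) * (1 - σ x₁) * x₁) + 1) ∧
      (x₁ ≠ 0 → 1 - (l / 2) * (1 - σ x₁) * x₁ > 0 →
        (deriv (fun t => W t x₂) x₁) * x₂ + (deriv (fun t => W x₁ t) x₂) * f x₁ x₂ < 0) :=
  LFW_on_subspace_general p₁₁ p₁₂ p₂₂ l d δ θ k f hp₁₂ hp₂₂ hdet hθ σ hσ W hW
end

section
/- Under the hypotheses of the main theorem (l ≤ 2/γ ensuring 1 - (l/2)(1-σ(x₁))x₁ > 0 on the region of interest), the only point x* in the region with ∇W(x*) = 0 is the origin, where W = (1+θσ(x₁))·½xᵀPx - k. -/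
set_option maxHeartbeats 1000000 in
/-- Under the parameter choices (`0 < l ≤ 2/γ` with `x₁ ≤ γ` on the region), the
only stationary point of `W = (1+θσ(x₁))·½xᵀPx - k` in the region is the origin. -/
theorem unique_stationary_point (p₁₁ p₁₂ p₂₂ l γ d δ θ k : ℝ)
    (hp₁₁ : 0 < p₁₁) (hp₁₂ : 0 < p₁₂) (hp₂₂ : 0 < p₂₂)
    (hdet : 0 < p₁₁ * p₂₂ - p₁₂ ^ 2)
    (hγ : 0 < γ) (hl : 0 < l) (hlγ : l ≤ 2 / γ) (hθ : 0 < θ)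
    (σ : ℝ → ℝ) (hσ : ∀ x₁, σ x₁ = 1 / (1 + Real.exp (l * (x₁ - d - δ / 2))))
    (W : ℝ → ℝ → ℝ)
    (hW : ∀ x₁ x₂, W x₁ x₂ =
      (1 + θ * σ x₁) * ((p₁₁ * x₁ ^ 2 + 2 * p₁₂ * x₁ * x₂ + p₂₂ * x₂ ^ 2) / 2) - k) :
    ∀ x₁ x₂ : ℝ, x₁ ≤ γ →
      deriv (fun t => W t x₂) x₁ = 0 → deriv (fun t => W x₁ t) x₂ = 0 →
      x₁ = 0 ∧ x₂ = 0 := by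
  intro x₁ x₂ hxγ h1 h2
  set s := σ x₁ with hs
  set E := Real.exp (l * (x₁ - d - δ / 2)) with hE
  have hEpos : 0 < E := Real.exp_pos _
  have hsE : s = 1 / (1 + E) := hσ x₁
  have hs0 : 0 < s := by rw [hsE]; positivity
  have hs1 : s < 1 := by
    rw [hsE, div_lt_one (by linarith)]; linarith
  have h1s : 0 < 1 - s := by linarith
  have h1θ : 0 < 1 + θ * s := by have := mul_pos hθ hs0; linarith
  have hlx : l * x₁ ≤ 2 := by
    rcases le_or_gt x₁ 0 with h | h
    · nlinarith
    · have hlg : l * γ ≤ 2 := (le_div_iff₀ hγ).mp hlγ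
      nlinarith
  have hbr : 0 < (1 + θ * s) - θ * l * s * (1 - s) * x₁ / 2 := by
    rcases le_or_gt x₁ 0 with h | h
    · have hnn : 0 ≤ θ * l * s * (1 - s) :=
        mul_nonneg (mul_nonneg (mul_nonneg hθ.le hl.le) hs0.le) h1s.le
      have := mul_nonpos_of_nonneg_of_nonpos hnn h
      linarith
    · have hpos : 0 ≤ θ * s * (1 - s) :=
        mul_nonneg (mul_nonneg hθ.le hs0.le) h1s.le
      have e1 := mul_le_mul_of_nonneg_left hlx hpos
      have e2 : θ * s * (1 - s) ≤ θ * s := by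
        have h3 : 0 ≤ θ * s * s := by positivity
        linarith
      linarith
  -- derivative of σ at x₁
  have hσfun : σ = fun t => 1 / (1 + Real.exp (l * (t - d - δ / 2))) := funext hσ
  have hσd : HasDerivAt σ (-(l * s * (1 - s))) x₁ := by
    have hin : HasDerivAt (fun t : ℝ => 1 + Real.exp (l * (t - d - δ / 2)))
        (l * E) x₁ := by
      have h0 : HasDerivAt (fun t : ℝ => l * (t - d - δ / 2)) l x₁ := by
        simpa using (((hasDerivAt_id x₁).sub_const d).sub_const (δ / 2)).const_mul l
      simpa [hE, mul_comm] using (h0.exp.const_add 1)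
    have hd : HasDerivAt (fun t : ℝ => 1 / (1 + Real.exp (l * (t - d - δ / 2))))
        ((0 * (1 + E) - 1 * (l * E)) / (1 + E) ^ 2) x₁ := by
      exact (hasDerivAt_const x₁ (1:ℝ)).div hin (by positivity)
    rw [hσfun]
    convert hd using 1
    rw [hsE]
    field_simp
    ring
  -- derivative in the first variable
  have hQd : HasDerivAt (fun t : ℝ => (p₁₁ * t ^ 2 + 2 * p₁₂ * t * x₂ + p₂₂ * x₂ ^ 2) / 2)
      ((p₁₁ * (2 * x₁) + 2 * p₁₂ * x₂) / 2) x₁ := by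
    have ha : HasDerivAt (fun t : ℝ => p₁₁ * t ^ 2) (p₁₁ * (2 * x₁)) x₁ := by
      simpa using (hasDerivAt_pow 2 x₁).const_mul p₁₁
    have hb : HasDerivAt (fun t : ℝ => 2 * p₁₂ * t * x₂) (2 * p₁₂ * x₂) x₁ := by
      simpa [mul_comm, mul_assoc] using ((hasDerivAt_id x₁).const_mul (2 * p₁₂)).mul_const x₂
    simpa using ((ha.add hb).add_const (p₂₂ * x₂ ^ 2)).div_const 2
  have hAd : HasDerivAt (fun t : ℝ => 1 + θ * σ t) (θ * (-(l * s * (1 - s)))) x₁ :=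
    (hσd.const_mul θ).const_add 1
  have hfd : HasDerivAt (fun t : ℝ =>
      (1 + θ * σ t) * ((p₁₁ * t ^ 2 + 2 * p₁₂ * t * x₂ + p₂₂ * x₂ ^ 2) / 2) - k)
      (θ * (-(l * s * (1 - s))) * ((p₁₁ * x₁ ^ 2 + 2 * p₁₂ * x₁ * x₂ + p₂₂ * x₂ ^ 2) / 2)
        + (1 + θ * s) * ((p₁₁ * (2 * x₁) + 2 * p₁₂ * x₂) / 2)) x₁ := by
    exact (hAd.mul hQd).sub_const k
  have heq1 : θ * (-(l * s * (1 - s))) * ((p₁₁ * x₁ ^ 2 + 2 * p₁₂ * x₁ * x₂ + p₂₂ * x₂ ^ 2) / 2)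
      + (1 + θ * s) * ((p₁₁ * (2 * x₁) + 2 * p₁₂ * x₂) / 2) = 0 := by
    rw [← h1]
    have hfe : (fun t => W t x₂) = fun t : ℝ =>
        (1 + θ * σ t) * ((p₁₁ * t ^ 2 + 2 * p₁₂ * t * x₂ + p₂₂ * x₂ ^ 2) / 2) - k :=
      funext fun t => hW t x₂
    rw [hfe, hfd.deriv]
  -- derivative in the second variable
  have hgd : HasDerivAt (fun t : ℝ =>
      (1 + θ * σ x₁) * ((p₁₁ * x₁ ^ 2 + 2 * p₁₂ * x₁ * t + p₂₂ * t ^ 2) / 2) - k)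
      ((1 + θ * s) * ((2 * p₁₂ * x₁ + p₂₂ * (2 * x₂)) / 2)) x₂ := by
    have hb : HasDerivAt (fun t : ℝ => 2 * p₁₂ * x₁ * t) (2 * p₁₂ * x₁) x₂ := by
      simpa using (hasDerivAt_id x₂).const_mul (2 * p₁₂ * x₁)
    have hcc : HasDerivAt (fun t : ℝ => p₂₂ * t ^ 2) (p₂₂ * (2 * x₂)) x₂ := by
      simpa using (hasDerivAt_pow 2 x₂).const_mul p₂₂
    have hq : HasDerivAt (fun t : ℝ => (p₁₁ * x₁ ^ 2 + 2 * p₁₂ * x₁ * t + p₂₂ * t ^ 2) / 2)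
        ((2 * p₁₂ * x₁ + p₂₂ * (2 * x₂)) / 2) x₂ := by
      simpa using (((hasDerivAt_const x₂ (p₁₁ * x₁ ^ 2)).add hb).add hcc).div_const 2
    exact ((hq.const_mul (1 + θ * σ x₁)).sub_const k)
  have heq2 : (1 + θ * s) * ((2 * p₁₂ * x₁ + p₂₂ * (2 * x₂)) / 2) = 0 := by
    rw [← h2]
    have hge : (fun t => W x₁ t) = fun t : ℝ =>
        (1 + θ * σ x₁) * ((p₁₁ * x₁ ^ 2 + 2 * p₁₂ * x₁ * t + p₂₂ * t ^ 2) / 2) - k :=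
      funext fun t => hW x₁ t
    rw [hge, hgd.deriv]
  -- algebra
  have hc : p₁₂ * x₁ + p₂₂ * x₂ = 0 := by
    rcases mul_eq_zero.mp heq2 with h | h
    · exact absurd h h1θ.ne'
    · linarith
  have key : (p₁₁ * p₂₂ - p₁₂ ^ 2) * x₁ *
      ((1 + θ * s) - θ * l * s * (1 - s) * x₁ / 2) = 0 := by
    linear_combination p₂₂ * heq1 +
      (θ * l * s * (1 - s) / 2 * (p₁₂ * x₁ + p₂₂ * x₂) - (1 + θ * s) * p₁₂) * hc
  have hx1 : x₁ = 0 := by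
    rcases mul_eq_zero.mp key with h | h
    · rcases mul_eq_zero.mp h with h' | h'
      · exact absurd h' hdet.ne'
      · exact h'
    · exact absurd h hbr.ne'
  refine ⟨hx1, ?_⟩
  rw [hx1] at hc
  have hpx : p₂₂ * x₂ = 0 := by linear_combination hc
  rcases mul_eq_zero.mp hpx with h | h
  · exact absurd h hp₂₂.ne'
  · exact h
end

section
/- The Sontag universal formula κ(a,b) = -((a + √(a² + ‖b‖⁴))/‖b‖²)·b for b ≠ 0 (and κ(a,0)=0) satisfies a + b·κ(a,b) = -√(a² + ‖b‖⁴) < 0 whenever b ≠ 0; moreover if b = 0 and a < 0 then a + b·κ(a,b) = a < 0. Hence whenever (a,b) satisfies the CLF implication (b = 0 ⟹ a < 0) and (a,b) ≠ (0,0), the closed-loop decrease a + b·κ(a,b) < 0 holds. -/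
/-- Sontag's universal formula (scalar input case). -/
noncomputable def sontag (a b : ℝ) : ℝ :=
  if b = 0 then 0 else -((a + Real.sqrt (a ^ 2 + b ^ 4)) / b ^ 2) * b

lemma sontag_eq (a b : ℝ) (hb : b ≠ 0) :
    a + b * sontag a b = -Real.sqrt (a ^ 2 + b ^ 4) := by
  have hb2 : b ^ 2 ≠ 0 := pow_ne_zero 2 hb
  simp only [sontag, if_neg hb]
  field_simp
  ring

lemma sontag_neg (a b : ℝ) (hb : b ≠ 0) : a + b * sontag a b < 0 := by
  rw [sontag_eq a b hb]
  have h : 0 < a ^ 2 + b ^ 4 := by positivity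
  simpa using Real.sqrt_pos.mpr h

/-- Sontag's formula satisfies `a + b·κ(a,b) = -√(a² + b⁴) < 0` for `b ≠ 0`,
and `a + b·κ(a,b) = a < 0` when `b = 0` and `a < 0`. Hence whenever
`(b = 0 → a < 0)` and `(a,b) ≠ (0,0)`, the decrease `a + b·κ(a,b) < 0` holds. -/
theorem sontag_decrease (a b : ℝ) :
    (b ≠ 0 → a + b * sontag a b = -Real.sqrt (a ^ 2 + b ^ 4) ∧ a + b * sontag a b < 0) ∧
      (b = 0 → a < 0 → a + b * sontag a b < 0) ∧
      ((b = 0 → a < 0) → ¬(a = 0 ∧ b = 0) → a + b * sontag a b < 0) := by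
  refine ⟨fun hb => ⟨sontag_eq a b hb, sontag_neg a b hb⟩, ?_, ?_⟩
  · intro hb ha; simp [hb, ha]
  · intro h _
    by_cases hb : b = 0
    · simpa [hb] using h hb
    · exact sontag_neg a b hb
end

section
/- Let W(x) = (1+θσ(x₁))V(x) - k with the parameter choices of the main theorem. The zero-sublevel set U = {x ∈ X : W(x) ≤ 0} is nonempty (it contains the origin) and is disjoint from the unsafe set D = {x ∈ X : x₁ ≤ d}. -/
/-- With the parameter choices of the main theorem, the zero-sublevel set
`U = {x ∈ X : W(x) ≤ 0}` contains the origin (hence is nonempty) and is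
disjoint from the unsafe set `D = {x ∈ X : x₁ ≤ d}`. -/
theorem U_nonempty_disjoint (p₁₁ p₁₂ p₂₂ l γ d δ θ v₁ v₂ k : ℝ)
    (X : Set (ℝ × ℝ)) (hX : IsCompact X) (h0 : (0, 0) ∈ X)
    (hd : d < 0)
    (hp₁₁ : 0 < p₁₁) (hp₂₂ : 0 < p₂₂) (hdet : 0 < p₁₁ * p₂₂ - p₁₂ ^ 2)
    (V : ℝ × ℝ → ℝ)
    (hV : ∀ x : ℝ × ℝ,
      V x = (p₁₁ * x.1 ^ 2 + 2 * p₁₂ * x.1 * x.2 + p₂₂ * x.2 ^ 2) / 2)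
    (hγ : 0 < γ) (hγsup : ∀ x ∈ X, x.1 ≤ γ)
    (hl : 0 < l) (hlγ : l ≤ 2 / γ)
    (hv₁ : 0 < v₁) (hv : v₁ < v₂)
    (hv₁min : ∀ x : ℝ × ℝ, x ∈ X → x.1 ≤ d → v₁ ≤ V x)
    (hδ : δ > (2 / l) * Real.log (v₂ / v₁))
    (σ : ℝ → ℝ) (hσ : ∀ x₁, σ x₁ = 1 / (1 + Real.exp (l * (x₁ - d - δ / 2))))
    (hθ : θ > (v₂ - v₁) / (σ d * v₁ - σ (d + δ) * v₂)) (hθpos : 0 < θ)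
    (hk : k = (1 + θ * σ (d + δ)) * v₂)
    (W : ℝ × ℝ → ℝ) (hW : ∀ x, W x = (1 + θ * σ x.1) * V x - k) :
    (0, 0) ∈ {x ∈ X | W x ≤ 0} ∧
      {x ∈ X | W x ≤ 0} ∩ {x ∈ X | x.1 ≤ d} = ∅ := by
  have hv₂ : 0 < v₂ := hv₁.trans hv
  have hσpos : ∀ t, 0 < σ t := by
    intro t; rw [hσ]; positivity
  set E := Real.exp (l * δ / 2) with hE
  have hEpos : 0 < E := Real.exp_pos _
  have hEgt : v₂ / v₁ < E := by
    have h2 : Real.log (v₂ / v₁) < l * δ / 2 := by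
      have h := mul_lt_mul_of_pos_left hδ hl
      have : l * (2 / l * Real.log (v₂ / v₁)) = 2 * Real.log (v₂ / v₁) := by
        field_simp
      rw [this] at h
      linarith
    calc v₂ / v₁ = Real.exp (Real.log (v₂ / v₁)) := (Real.exp_log (by positivity)).symm
      _ < E := Real.exp_lt_exp.mpr h2
  have hσd : σ d = E / (E + 1) := by
    rw [hσ]
    have harg : l * (d - d - δ / 2) = -(l * δ / 2) := by ring
    rw [harg, Real.exp_neg, ← hE]
    field_simp
  have hσdδ : σ (d + δ) = 1 / (E + 1) := by
    rw [hσ]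
    have harg : l * (d + δ - d - δ / 2) = l * δ / 2 := by ring
    rw [harg, ← hE, add_comm]
  have hEv : v₂ < E * v₁ := (div_lt_iff₀ hv₁).mp hEgt
  have hden : 0 < σ d * v₁ - σ (d + δ) * v₂ := by
    rw [hσd, hσdδ]
    have : E / (E + 1) * v₁ - 1 / (E + 1) * v₂ = (E * v₁ - v₂) / (E + 1) := by
      field_simp
    rw [this]
    exact div_pos (by linarith) (by linarith)
  have hθ' : v₂ - v₁ < θ * (σ d * v₁ - σ (d + δ) * v₂) := (div_lt_iff₀ hden).mp hθ
  have hkpos : 0 < k := by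
    rw [hk]
    have h := hσpos (d + δ)
    nlinarith [mul_pos hθpos h]
  constructor
  · refine ⟨h0, ?_⟩
    have hV0 : V (0, 0) = 0 := by rw [hV]; norm_num
    rw [hW, hV0]
    simp
    linarith
  · rw [Set.eq_empty_iff_forall_notMem]
    rintro x ⟨⟨hxX, hWx⟩, ⟨-, hxd⟩⟩
    have hVx : v₁ ≤ V x := hv₁min x hxX hxd
    have hσx : σ d ≤ σ x.1 := by
      rw [hσ, hσ]
      apply one_div_le_one_div_of_le
      · positivity
      · have : l * (x.1 - d - δ / 2) ≤ l * (d - d - δ / 2) := by nlinarith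
        have := Real.exp_le_exp.mpr this
        linarith
    have h1 : (1 + θ * σ d) * v₁ ≤ (1 + θ * σ x.1) * V x := by
      apply mul_le_mul (by nlinarith) hVx (le_of_lt hv₁)
      nlinarith [hσpos x.1]
    have hWpos : 0 < W x := by
      rw [hW x, hk]
      linarith [h1, hθ']
    linarith
end
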